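/- Let D ⊆ L(A) be a peak-pit Condorcet domain and let a, b, c ∈ A be distinct alternatives. Let R, T ∈ D be linear orders such that in R the alternatives a, b, c appear consecutively in the order a, b, c, in T they appear consecutively in the order c, a, b, and R_{A∖{a,b}} = T_{A∖{a,b}}. Let S ∈ L(A) be a linear order in which a, c, b appear consecutively in the order a, c, b and with S_{A∖{a,b}} = R_{A∖{a,b}}. Then D ∪ {S} is a peak-pit Condorcet domain. -/

import Mathlib

/-!
Common definitions for formalizing Condorcet domains.

A linear order on a finite set `A : Finset α` of alternatives is encoded as a
duplicate-free list enumerating the elements of `A` from most preferred (head)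
to least preferred (last).
-/

variable {α : Type*}

/-- `l` is a linear order on the finite set `A` of alternatives. -/
def IsLinOrd [DecidableEq α] (A : Finset α) (l : List α) : Prop :=
  l.Nodup ∧ l.toFinset = A

/-- The restriction of a linear order `l` to the subset `S` of alternatives. -/
def restrictOrd [DecidableEq α] (l : List α) (S : Finset α) : List α :=
  l.filter (fun x => decide (x ∈ S))

/-- The restriction of a domain `D` to the subset `S` of alternatives. -/
def restrictDom [DecidableEq α] (D : Set (List α)) (S : Finset α) : Set (List α) :=
  (fun l => restrictOrd l S) '' D

/-- The never-condition `x N (k+1)`: no linear order in `E` ranks `x` in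
position `k+1` (positions are counted from `1`, so `k : Fin 3` is the
zero-based index).  `k = 0` is a never-top condition, `k = 2` a never-bottom
condition. -/
def NeverCond (E : Set (List α)) (x : α) (k : Fin 3) : Prop :=
  ∀ l ∈ E, l[(k : ℕ)]? ≠ some x

/-- The set of never-conditions (encoded as pairs `(x, k)`) satisfied by a
domain `E` on the triple `T`. -/
def NeverConds (T : Finset α) (E : Set (List α)) : Set (α × Fin 3) :=
  {p | p.1 ∈ T ∧ NeverCond E p.1 p.2}

/-- The set of peak-pit conditions (never-top or never-bottom conditions)
satisfied by a domain `E` on the triple `T`. -/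
def PeakPitConds (T : Finset α) (E : Set (List α)) : Set (α × Fin 3) :=
  {p | p.1 ∈ T ∧ (p.2 = 0 ∨ p.2 = 2) ∧ NeverCond E p.1 p.2}

/-- `D` is a Condorcet domain on `A`: a set of linear orders on `A` whose
restriction to every triple of distinct alternatives satisfies some
never-condition. -/
def IsCondorcetDomain [DecidableEq α] (A : Finset α) (D : Set (List α)) : Prop :=
  (∀ l ∈ D, IsLinOrd A l) ∧
    ∀ a b c : α, a ∈ A → b ∈ A → c ∈ A → a ≠ b → a ≠ c → b ≠ c →
      ∃ x ∈ ({a, b, c} : Finset α), ∃ k : Fin 3,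
        NeverCond (restrictDom D {a, b, c}) x k

/-- `D` is a peak-pit Condorcet domain on `A`: a set of linear orders on `A`
whose restriction to every triple of distinct alternatives satisfies a
never-top or a never-bottom condition. -/
def IsPeakPitDomain [DecidableEq α] (A : Finset α) (D : Set (List α)) : Prop :=
  (∀ l ∈ D, IsLinOrd A l) ∧
    ∀ a b c : α, a ∈ A → b ∈ A → c ∈ A → a ≠ b → a ≠ c → b ≠ c →
      ∃ x ∈ ({a, b, c} : Finset α),
        NeverCond (restrictDom D {a, b, c}) x 0 ∨
          NeverCond (restrictDom D {a, b, c}) x 2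

/-- Two linear orders are alike if they differ by a swap of two adjacent
alternatives. -/
def Alike (R T : List α) : Prop :=
  ∃ (l₁ l₂ : List α) (x y : α), x ≠ y ∧
    R = l₁ ++ x :: y :: l₂ ∧ T = l₁ ++ y :: x :: l₂

/-- `P` is a path of alike linear orders on `L(A)`. -/
def IsPathOn [DecidableEq α] (A : Finset α) (P : List (List α)) : Prop :=
  P ≠ [] ∧ (∀ l ∈ P, IsLinOrd A l) ∧ P.Chain' Alike

/-- `P` is a path of alike linear orders on `L(A)` connecting `R` and `T`. -/
def IsPath [DecidableEq α] (A : Finset α) (P : List (List α)) (R T : List α) : Prop :=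
  IsPathOn A P ∧ P.head? = some R ∧ P.getLast? = some T

/-- `P` is a geodesic on `L(A)` connecting `R` and `T`: a path of alike linear
orders of minimal length among all such paths. -/
def IsGeodesic [DecidableEq α] (A : Finset α) (P : List (List α)) (R T : List α) : Prop :=
  IsPath A P R T ∧ ∀ Q : List (List α), IsPath A Q R T → P.length ≤ Q.length

/-- The switching pair of alternatives between two alike linear orders (as an
unordered pair); `none` if the two lists do not differ. -/
def switchPair? [DecidableEq α] (R T : List α) : Option (Sym2 α) :=
  ((R.zip T).find? (fun p => decide (p.1 ≠ p.2))).map (fun p => Sym2.mk p.1 p.2)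

/-- `S(P)`: the sequence of switching pairs of a path of alike linear orders. -/
def switchSeq [DecidableEq α] (P : List (List α)) : List (Sym2 α) :=
  (P.zip P.tail).filterMap (fun p => switchPair? p.1 p.2)

/-- The restriction of a path to the subset `B`: restrict every member and
remove consecutive duplicates. -/
def restrictPath [DecidableEq α] (P : List (List α)) (B : Finset α) : List (List α) :=
  (P.map (fun l => restrictOrd l B)).destutter (· ≠ ·)

/-- `D` is connected: any two of its members are joined by a path of alike
linear orders lying entirely in `D`. -/
def ConnectedDomain [DecidableEq α] (A : Finset α) (D : Set (List α)) : Prop :=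
  ∀ R ∈ D, ∀ T ∈ D, ∃ P : List (List α), IsPath A P R T ∧ ∀ l ∈ P, l ∈ D

/-- `D` is directly connected: any two of its members are joined by a geodesic
lying entirely in `D`. -/
def DirectlyConnectedDomain [DecidableEq α] (A : Finset α) (D : Set (List α)) : Prop :=
  ∀ R ∈ D, ∀ T ∈ D, ∃ P : List (List α), IsGeodesic A P R T ∧ ∀ l ∈ P, l ∈ D

/-- Two unordered pairs of alternatives are disjoint. -/
def DisjointPair (p q : Sym2 α) : Prop := ∀ x : α, x ∈ p → x ∉ q

/-- One swap of an adjacent disjoint pair of switching pairs in a sequence of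
switching pairs. -/
inductive AdjSwap : List (Sym2 α) → List (Sym2 α) → Prop
  | swap (l₁ l₂ : List (Sym2 α)) (p q : Sym2 α) (h : DisjointPair p q) :
      AdjSwap (l₁ ++ p :: q :: l₂) (l₁ ++ q :: p :: l₂)

/-- Two paths are equivalent if their sequences of switching pairs differ by a
finite number of swaps of adjacent disjoint pairs of switching pairs. -/
def PathEquiv [DecidableEq α] (P Q : List (List α)) : Prop :=
  Relation.ReflTransGen AdjSwap (switchSeq P) (switchSeq Q)

/-- Two domains are isomorphic if some bijection between the underlying sets of
alternatives maps one domain onto the other (acting position-wise on linear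
orders). -/
def DomIsomorphic (A B : Finset α) (D E : Set (List α)) : Prop :=
  ∃ f : α → α, Set.BijOn f ↑A ↑B ∧ E = (fun l => l.map f) '' D

/-!
Restricting to `A \ {a, b}` turns `R = u abc v`, `T = u' cab v'` and `S = w acb w'` into
`u c v`, `u' c v'` and `w c w'`; as `c` occurs once, all three orders share the same outer parts.
On a triple missing `b` or `c`, `S` restricts like `R` (they differ by the adjacent swap `bc`),
and on a triple missing `a` like `T`, so only the triple `{a, b, c}` is new. There `D` contains
`abc` and `cab`, which leave only the peak-pit conditions `b N 1` and `a N 3`, and `acb` satisfies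
both.
-/

section Restriction

variable [DecidableEq α] {A X : Finset α} {u m v : List α}

theorem restrictOrd_append (l₁ l₂ : List α) (X : Finset α) :
    restrictOrd (l₁ ++ l₂) X = restrictOrd l₁ X ++ restrictOrd l₂ X :=
  List.filter_append ..

theorem restrictOrd_swap_of_notMem {x y : α} (h : x ∉ X ∨ y ∉ X) (l₁ l₂ : List α) :
    restrictOrd (l₁ ++ x :: y :: l₂) X = restrictOrd (l₁ ++ y :: x :: l₂) X := by
  rcases h with h | h <;> simp [restrictOrd, List.filter_cons, h]

theorem restrictDom_union_singleton (D : Set (List α)) (l : List α) (X : Finset α) :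
    restrictDom (D ∪ {l}) X = restrictDom D X ∪ {restrictOrd l X} := by
  rw [restrictDom, restrictDom, Set.image_union, Set.image_singleton]

theorem IsLinOrd.mem_sdiff_of_mem_outer (h : IsLinOrd A (u ++ m ++ v)) {x : α}
    (hx : x ∈ u ∨ x ∈ v) : x ∈ A \ m.toFinset := by
  have hnd : (m ++ (u ++ v)).Nodup := h.1.perm (by simpa using List.perm_append_comm.append_right v)
  rw [Finset.mem_sdiff, ← h.2, List.mem_toFinset, List.mem_toFinset]
  exact ⟨by simp only [List.mem_append]; tauto,
    fun hm => List.disjoint_of_nodup_append hnd hm (List.mem_append.2 hx)⟩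

theorem IsLinOrd.restrictOrd_of_sdiff_subset (h : IsLinOrd A (u ++ m ++ v))
    (hX : A \ m.toFinset ⊆ X) : restrictOrd (u ++ m ++ v) X = u ++ restrictOrd m X ++ v := by
  have hu : restrictOrd u X = u :=
    List.filter_eq_self.2 fun x hx => by simpa using hX (h.mem_sdiff_of_mem_outer (.inl hx))
  have hv : restrictOrd v X = v :=
    List.filter_eq_self.2 fun x hx => by simpa using hX (h.mem_sdiff_of_mem_outer (.inr hx))
  rw [restrictOrd_append, restrictOrd_append, hu, hv]

theorem IsLinOrd.restrictOrd_eq_of_toFinset_eq (h : IsLinOrd A (u ++ m ++ v))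
    (hX : m.toFinset = X) : restrictOrd (u ++ m ++ v) X = m := by
  have hout : ∀ x, x ∈ u ∨ x ∈ v → x ∉ X := fun x hx hxX =>
    (Finset.mem_sdiff.1 (h.mem_sdiff_of_mem_outer hx)).2 (hX ▸ hxX)
  have hu : restrictOrd u X = [] :=
    List.filter_eq_nil_iff.2 fun x hx => by simpa using hout x (.inl hx)
  have hm : restrictOrd m X = m :=
    List.filter_eq_self.2 fun x hx => by simp [← hX, hx]
  have hv : restrictOrd v X = [] :=
    List.filter_eq_nil_iff.2 fun x hx => by simpa using hout x (.inr hx)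
  rw [restrictOrd_append, restrictOrd_append, hu, hm, hv, List.nil_append, List.append_nil]

theorem IsLinOrd.outer_eq_of_restrictOrd_eq {u' m' v' : List α} {c : α}
    (h : IsLinOrd A (u ++ m ++ v)) (h' : IsLinOrd A (u' ++ m' ++ v'))
    (hX : A \ m.toFinset ⊆ X) (hX' : A \ m'.toFinset ⊆ X)
    (hm : restrictOrd m X = [c]) (hm' : restrictOrd m' X = [c])
    (heq : restrictOrd (u ++ m ++ v) X = restrictOrd (u' ++ m' ++ v') X) :
    u = u' ∧ v = v' := by
  rw [h.restrictOrd_of_sdiff_subset hX, h'.restrictOrd_of_sdiff_subset hX', hm, hm'] at heq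
  have hcm : c ∈ m.toFinset := by
    have hcX : c ∈ restrictOrd m X := by simp [hm]
    exact List.mem_toFinset.2 (List.mem_of_mem_filter hcX)
  have hcu : c ∉ u := fun hcu =>
    (Finset.mem_sdiff.1 (h.mem_sdiff_of_mem_outer (.inl hcu))).2 hcm
  have hcv : c ∉ v := fun hcv =>
    (Finset.mem_sdiff.1 (h.mem_sdiff_of_mem_outer (.inr hcv))).2 hcm
  simp only [List.append_assoc, List.singleton_append] at heq
  obtain ⟨hu, -, hv⟩ := (List.append_cons_inj_of_notMem hcu hcv).1 heq
  exact ⟨hu, hv⟩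

theorem restrictOrd_acb_mem_restrictDom {D : Set (List α)} {a b c : α}
    (hR : u ++ [a, b, c] ++ v ∈ D) (hT : u ++ [c, a, b] ++ v ∈ D)
    (hX : ¬(a ∈ X ∧ b ∈ X ∧ c ∈ X)) :
    restrictOrd (u ++ [a, c, b] ++ v) X ∈ restrictDom D X := by
  by_cases ha : a ∈ X
  · refine ⟨_, hR, ?_⟩
    simpa using restrictOrd_swap_of_notMem (by tauto) (u ++ [a]) v
  · refine ⟨_, hT, ?_⟩
    simpa using (restrictOrd_swap_of_notMem (.inl ha) u (b :: v)).symm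

end Restriction

theorem Finset.triple_eq_of_mem [DecidableEq α] {a b c x y z : α}
    (hab : a ≠ b) (hac : a ≠ c) (hbc : b ≠ c)
    (h : a ∈ ({x, y, z} : Finset α) ∧ b ∈ ({x, y, z} : Finset α) ∧ c ∈ ({x, y, z} : Finset α)) :
    ({x, y, z} : Finset α) = {a, b, c} :=
  (Finset.eq_of_subset_of_card_le (by simp [Finset.insert_subset_iff, h])
    (Finset.card_le_three.trans (Finset.card_eq_three.2 ⟨a, b, c, hab, hac, hbc, rfl⟩).ge)).symm

theorem NeverCond.union_singleton {E : Set (List α)} {x : α} {k : Fin 3} {l : List α}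
    (hE : NeverCond E x k) (hl : l[(k : ℕ)]? ≠ some x) : NeverCond (E ∪ {l}) x k := by
  rintro l' (hl' | rfl)
  exacts [hE l' hl', hl]

theorem exists_peakPit_union_acb [DecidableEq α] {E : Set (List α)} {a b c : α} (hab : a ≠ b)
    (habc : [a, b, c] ∈ E) (hcab : [c, a, b] ∈ E)
    (hE : ∃ x ∈ ({a, b, c} : Finset α), NeverCond E x 0 ∨ NeverCond E x 2) :
    ∃ x ∈ ({a, b, c} : Finset α),
      NeverCond (E ∪ {[a, c, b]}) x 0 ∨ NeverCond (E ∪ {[a, c, b]}) x 2 := by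
  obtain ⟨x, hx, htop | hbot⟩ := hE
  · obtain rfl : x = b := by
      have hxa : a ≠ x := by simpa using htop _ habc
      have hxc : c ≠ x := by simpa using htop _ hcab
      simp only [Finset.mem_insert, Finset.mem_singleton] at hx
      rcases hx with rfl | rfl | rfl
      exacts [absurd rfl hxa, rfl, absurd rfl hxc]
    exact ⟨x, hx, .inl (htop.union_singleton (by simp [hab]))⟩
  · obtain rfl : x = a := by
      have hxc : c ≠ x := by simpa using hbot _ habc
      have hxb : b ≠ x := by simpa using hbot _ hcab
      simp only [Finset.mem_insert, Finset.mem_singleton] at hx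
      rcases hx with rfl | rfl | rfl
      exacts [rfl, absurd rfl hxb, absurd rfl hxc]
    exact ⟨x, hx, .inr (hbot.union_singleton (by simp [hab.symm]))⟩

/-- Let `D ⊆ L(A)` be a peak-pit Condorcet domain, `a,b,c ∈ A`
distinct, and let `R = ⋯abc⋯` and `T = ⋯cab⋯` be members of `D` with
`R_{A∖{a,b}} = T_{A∖{a,b}}`.  If `S = ⋯acb⋯` is a linear order on `A` with
`S_{A∖{a,b}} = R_{A∖{a,b}}`, then `D ∪ {S}` is a peak-pit Condorcet domain. -/
theorem union_single_peakPit [DecidableEq α] (A : Finset α)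
    (D : Set (List α)) (hD : IsPeakPitDomain A D) (a b c : α)
    (ha : a ∈ A) (hb : b ∈ A) (hc : c ∈ A)
    (hab : a ≠ b) (hac : a ≠ c) (hbc : b ≠ c)
    (R T S : List α) (hR : R ∈ D) (hT : T ∈ D)
    (hRform : ∃ u v : List α, R = u ++ a :: b :: c :: v)
    (hTform : ∃ u v : List α, T = u ++ c :: a :: b :: v)
    (hRT : restrictOrd R (A \ {a, b}) = restrictOrd T (A \ {a, b}))
    (hS : IsLinOrd A S)
    (hSform : ∃ u v : List α, S = u ++ a :: c :: b :: v)
    (hSR : restrictOrd S (A \ {a, b}) = restrictOrd R (A \ {a, b})) :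
    IsPeakPitDomain A (D ∪ {S}) := by
  obtain ⟨hDlin, hDpp⟩ := hD
  obtain ⟨u, v, rfl⟩ : ∃ u v, R = u ++ [a, b, c] ++ v := by simpa using hRform
  obtain ⟨u', v', rfl⟩ : ∃ u v, T = u ++ [c, a, b] ++ v := by simpa using hTform
  obtain ⟨w, w', rfl⟩ : ∃ u v, S = u ++ [a, c, b] ++ v := by simpa using hSform
  have hRlin := hDlin _ hR
  have hX : ∀ m ∈ [[a, b, c], [c, a, b], [a, c, b]], A \ m.toFinset ⊆ A \ {a, b} := by
    intro m hm
    refine Finset.sdiff_subset_sdiff subset_rfl ?_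
    simp only [List.mem_cons, List.not_mem_nil, or_false] at hm
    rcases hm with rfl | rfl | rfl <;> simp [Finset.insert_subset_iff]
  have hm : ∀ m ∈ [[a, b, c], [c, a, b], [a, c, b]], restrictOrd m (A \ {a, b}) = [c] := by
    simp [restrictOrd, hc, hac.symm, hbc.symm]
  obtain ⟨rfl, rfl⟩ := hRlin.outer_eq_of_restrictOrd_eq (hDlin _ hT) (hX _ (by simp))
    (hX _ (by simp)) (hm _ (by simp)) (hm _ (by simp)) hRT
  obtain ⟨rfl, rfl⟩ := hRlin.outer_eq_of_restrictOrd_eq hS (hX _ (by simp))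
    (hX _ (by simp)) (hm _ (by simp)) (hm _ (by simp)) hSR.symm
  refine ⟨fun l hl => hl.elim (hDlin l) fun hl => hl ▸ hS,
    fun x y z hx hy hz hxy hxz hyz => ?_⟩
  rw [restrictDom_union_singleton]
  by_cases habc : a ∈ ({x, y, z} : Finset α) ∧ b ∈ ({x, y, z} : Finset α) ∧
      c ∈ ({x, y, z} : Finset α)
  · rw [Finset.triple_eq_of_mem hab hac hbc habc,
      hS.restrictOrd_eq_of_toFinset_eq (by ext; simp; tauto)]
    exact exists_peakPit_union_acb hab ⟨_, hR, hRlin.restrictOrd_eq_of_toFinset_eq (by simp)⟩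
      ⟨_, hT, (hDlin _ hT).restrictOrd_eq_of_toFinset_eq (by ext; simp; tauto)⟩
      (hDpp a b c ha hb hc hab hac hbc)
  · rw [Set.union_singleton, Set.insert_eq_of_mem (restrictOrd_acb_mem_restrictDom hR hT habc)]
    exact hDpp x y z hx hy hz hxy hxz hyz
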